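/- Any weight configuration W that maximizes φ^tot(W) (i.e., achieves φ^tot(W) = 1) has at most |V_1| + |V_K| + K − 3 non-zero weights, provided K > 2. -/

import Mathlib

/-!
The normalized weights of each layer are non-negative and sum to `1`, so the sum over *all*
edge sequences of the products of weights equals `∏ₖ 1 = 1`. If the contiguous sequences alone
already achieve `1`, every non-contiguous sequence has product `0`. Hence any two non-zero edges
in consecutive layers share their common node. Consequently all non-zero edges of a middle layer
are the same edge, those of the first layer all end at one node, and those of the last layer all
start at one node, which gives `1` per middle layer, at most `|V₁|` and at most `|V_K|`.
-/

open Finset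

/-- Contiguity of an edge sequence: consecutive edges share endpoints. -/
def Contig (K : ℕ) (γ : Fin (K-1) → ℕ × ℕ) : Prop :=
  ∀ k : Fin (K-1), ∀ h : k.val + 1 < K - 1, (γ k).2 = (γ ⟨k.val + 1, h⟩).1

instance (K : ℕ) (γ : Fin (K-1) → ℕ × ℕ) : Decidable (Contig K γ) := by
  unfold Contig; infer_instance

/-- Total connectivity: sum over all contiguous input-to-output edge sequences of
the product of edge weights. -/
noncomputable def phiTot (K : ℕ) (E : ℕ → Finset (ℕ × ℕ)) (θ : ℕ → ℕ → ℕ → ℝ) : ℝ :=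
  ∑ γ ∈ (Fintype.piFinset (fun k : Fin (K-1) => E k.val)).filter (fun γ => Contig K γ),
    ∏ k : Fin (K-1), θ k.val (γ k).1 (γ k).2

/-- Total absolute weight of layer k. -/
noncomputable def Snorm (E : ℕ → Finset (ℕ × ℕ)) (W : ℕ → ℕ → ℕ → ℝ) (k : ℕ) : ℝ :=
  ∑ e ∈ E k, |W k e.1 e.2|

/-- Per-layer normalized weights. -/
noncomputable def thetaNorm (E : ℕ → Finset (ℕ × ℕ)) (W : ℕ → ℕ → ℕ → ℝ)
    (k i j : ℕ) : ℝ :=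
  |W k i j| / Snorm E W k

/-- Connectivity from the input layer to node `r` in layer `l`. -/
noncomputable def aIn (E : ℕ → Finset (ℕ × ℕ)) (θ : ℕ → ℕ → ℕ → ℝ) (l r : ℕ) : ℝ :=
  ∑ γ ∈ (Fintype.piFinset (fun k : Fin l => E k.val)).filter
      (fun γ => (∀ k : Fin l, ∀ h : k.val + 1 < l, (γ k).2 = (γ ⟨k.val + 1, h⟩).1)
        ∧ ∀ h : 0 < l, (γ ⟨l - 1, by omega⟩).2 = r),
    ∏ k : Fin l, θ k.val (γ k).1 (γ k).2

/-- Connectivity from node `r` in layer `l` to the output layer (layer K-1). -/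
noncomputable def aOut (K : ℕ) (E : ℕ → Finset (ℕ × ℕ)) (θ : ℕ → ℕ → ℕ → ℝ)
    (l r : ℕ) : ℝ :=
  ∑ γ ∈ (Fintype.piFinset (fun k : Fin (K - 1 - l) => E (l + k.val))).filter
      (fun γ => (∀ k : Fin (K - 1 - l), ∀ h : k.val + 1 < K - 1 - l,
          (γ k).2 = (γ ⟨k.val + 1, h⟩).1)
        ∧ ∀ h : 0 < K - 1 - l, (γ ⟨0, h⟩).1 = r),
    ∏ k : Fin (K - 1 - l), θ (l + k.val) (γ k).1 (γ k).2

lemma eq_zero_of_sum_filter_eq_sum {ι M : Type*} [AddCommGroup M] [PartialOrder M]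
    [IsOrderedAddMonoid M] {s : Finset ι} {p : ι → Prop} [DecidablePred p] {f : ι → M}
    (hf : ∀ i ∈ s, 0 ≤ f i) (h : ∑ i ∈ s.filter p, f i = ∑ i ∈ s, f i)
    {i : ι} (hi : i ∈ s) (hpi : ¬ p i) : f i = 0 := by
  have hrest : ∑ j ∈ s.filter (fun j => ¬ p j), f j = 0 := by
    have := sum_filter_add_sum_filter_not s p f
    rw [h] at this
    exact left_eq_add.mp this.symm
  exact (sum_eq_zero_iff_of_nonneg fun j hj => hf j (mem_filter.mp hj).1).mp hrest i
    (mem_filter.mpr ⟨hi, hpi⟩)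

lemma sum_range_le_of_le_ends (m a b : ℕ) (c : ℕ → ℕ) (h₀ : c 0 ≤ a) (hlast : c (m + 1) ≤ b)
    (hmid : ∀ k, 0 < k → k < m + 1 → c k ≤ 1) :
    ∑ k ∈ range (m + 2), c k ≤ a + b + m := by
  rw [sum_range_succ, sum_range_succ']
  have hmid' : ∑ k ∈ range m, c (k + 1) ≤ m := by
    simpa using sum_le_card_nsmul (range m) (fun k => c (k + 1)) 1 fun k hk =>
      hmid (k + 1) k.succ_pos (by simpa using hk)
  omega

noncomputable def nonzeroEdges (E : ℕ → Finset (ℕ × ℕ)) (W : ℕ → ℕ → ℕ → ℝ) (k : ℕ) :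
    Finset (ℕ × ℕ) :=
  (E k).filter fun e => W k e.1 e.2 ≠ 0

section Normalized

variable {K : ℕ} {E : ℕ → Finset (ℕ × ℕ)} {W : ℕ → ℕ → ℕ → ℝ}

lemma thetaNorm_nonneg (k i j : ℕ) : 0 ≤ thetaNorm E W k i j :=
  div_nonneg (abs_nonneg _) (sum_nonneg fun _ _ => abs_nonneg _)

lemma thetaNorm_ne_zero_iff {k : ℕ} (hk : 0 < Snorm E W k) {i j : ℕ} :
    thetaNorm E W k i j ≠ 0 ↔ W k i j ≠ 0 := by
  simp [thetaNorm, hk.ne']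

lemma sum_thetaNorm_eq_one {k : ℕ} (hk : 0 < Snorm E W k) :
    ∑ e ∈ E k, thetaNorm E W k e.1 e.2 = 1 := by
  unfold thetaNorm
  rw [← sum_div]
  exact div_self hk.ne'

lemma nonzeroEdges_nonempty {k : ℕ} (hk : 0 < Snorm E W k) : (nonzeroEdges E W k).Nonempty := by
  by_contra h
  refine hk.ne' (sum_eq_zero fun e he => ?_)
  simp_all [nonzeroEdges, not_nonempty_iff_eq_empty, filter_eq_empty_iff]

variable (hS : ∀ k, k < K - 1 → 0 < Snorm E W k)
include hS

lemma sum_piFinset_prod_thetaNorm :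
    ∑ γ ∈ Fintype.piFinset (fun k : Fin (K - 1) => E k),
      ∏ k : Fin (K - 1), thetaNorm E W k (γ k).1 (γ k).2 = 1 := by
  rw [← prod_univ_sum (fun k : Fin (K - 1) => E k) fun k e => thetaNorm E W k e.1 e.2]
  exact prod_eq_one fun k _ => sum_thetaNorm_eq_one (hS k k.isLt)

variable (hmax : phiTot K E (thetaNorm E W) = 1)
include hmax

lemma contig_of_forall_mem_nonzeroEdges {γ : Fin (K - 1) → ℕ × ℕ}
    (hγ : ∀ k : Fin (K - 1), γ k ∈ nonzeroEdges E W k) :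
    Contig K γ := by
  by_contra hc
  have hmem : γ ∈ Fintype.piFinset (fun k : Fin (K - 1) => E k) :=
    Fintype.mem_piFinset.mpr fun k => (mem_filter.mp (hγ k)).1
  have hprod : ∏ k : Fin (K - 1), thetaNorm E W k (γ k).1 (γ k).2 ≠ 0 :=
    prod_ne_zero_iff.mpr fun k _ =>
      (thetaNorm_ne_zero_iff (hS k k.isLt)).mpr (mem_filter.mp (hγ k)).2
  refine hprod (eq_zero_of_sum_filter_eq_sum
    (f := fun γ => ∏ k : Fin (K - 1), thetaNorm E W k (γ k).1 (γ k).2)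
    (fun γ _ => prod_nonneg fun k _ => thetaNorm_nonneg _ _ _) ?_ hmem hc)
  rw [sum_piFinset_prod_thetaNorm hS]
  exact hmax

lemma snd_eq_fst_of_mem_nonzeroEdges {k : ℕ}
    (hk : k + 1 < K - 1) {e e' : ℕ × ℕ} (he : e ∈ nonzeroEdges E W k)
    (he' : e' ∈ nonzeroEdges E W (k + 1)) : e.2 = e'.1 := by
  let i : Fin (K - 1) := ⟨k, by omega⟩
  let i' : Fin (K - 1) := ⟨k + 1, hk⟩
  have hii' : i ≠ i' := by simp [i, i', Fin.ext_iff]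
  choose pick hpick using fun l : Fin (K - 1) => nonzeroEdges_nonempty (hS l l.isLt)
  let γ := Function.update (Function.update pick i e) i' e'
  have hγ : ∀ l : Fin (K - 1), γ l ∈ nonzeroEdges E W l := by
    intro l
    by_cases hl' : l = i'
    · subst hl'; simpa [γ] using he'
    by_cases hl : l = i
    · subst hl; simpa [γ, hii'] using he
    simpa [γ, hl, hl'] using hpick l
  have hcontig : (γ i).2 = (γ i').1 := contig_of_forall_mem_nonzeroEdges hS hmax hγ i hk
  simpa [γ, hii'] using hcontig

lemma exists_forall_snd_eq_of_mem_nonzeroEdges {k : ℕ}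
    (hk : k + 1 < K - 1) : ∃ b, ∀ e ∈ nonzeroEdges E W k, e.2 = b := by
  obtain ⟨e', he'⟩ := nonzeroEdges_nonempty (hS (k + 1) hk)
  exact ⟨e'.1, fun e he => snd_eq_fst_of_mem_nonzeroEdges hS hmax hk he he'⟩

lemma exists_forall_fst_eq_of_mem_nonzeroEdges {k : ℕ}
    (hk₀ : 0 < k) (hk : k < K - 1) : ∃ a, ∀ e ∈ nonzeroEdges E W k, e.1 = a := by
  obtain ⟨e, he⟩ := nonzeroEdges_nonempty (hS (k - 1) (by omega))
  refine ⟨e.2, fun e' he' => ?_⟩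
  rw [← Nat.sub_add_cancel hk₀] at he'
  exact (snd_eq_fst_of_mem_nonzeroEdges hS hmax (by omega) he he').symm

lemma card_nonzeroEdges_le_card_left {k : ℕ}
    (hk : k + 1 < K - 1) {A B : Finset ℕ} (hE : E k ⊆ A ×ˢ B) :
    (nonzeroEdges E W k).card ≤ A.card := by
  obtain ⟨b, hb⟩ := exists_forall_snd_eq_of_mem_nonzeroEdges hS hmax hk
  calc (nonzeroEdges E W k).card ≤ (A ×ˢ {b}).card := card_le_card fun e he =>
        mem_product.mpr ⟨(mem_product.mp (hE (mem_filter.mp he).1)).1, mem_singleton.mpr (hb e he)⟩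
    _ = A.card := by simp

lemma card_nonzeroEdges_le_card_right {k : ℕ}
    (hk₀ : 0 < k) (hk : k < K - 1) {A B : Finset ℕ} (hE : E k ⊆ A ×ˢ B) :
    (nonzeroEdges E W k).card ≤ B.card := by
  obtain ⟨a, ha⟩ := exists_forall_fst_eq_of_mem_nonzeroEdges hS hmax hk₀ hk
  calc (nonzeroEdges E W k).card ≤ ({a} ×ˢ B).card := card_le_card fun e he =>
        mem_product.mpr ⟨mem_singleton.mpr (ha e he), (mem_product.mp (hE (mem_filter.mp he).1)).2⟩
    _ = B.card := by simp

lemma card_nonzeroEdges_le_one {k : ℕ}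
    (hk₀ : 0 < k) (hk : k + 1 < K - 1) : (nonzeroEdges E W k).card ≤ 1 := by
  obtain ⟨a, ha⟩ := exists_forall_fst_eq_of_mem_nonzeroEdges hS hmax hk₀ (by omega)
  obtain ⟨b, hb⟩ := exists_forall_snd_eq_of_mem_nonzeroEdges hS hmax hk
  exact card_le_one.mpr fun e he e' he' =>
    Prod.ext ((ha e he).trans (ha e' he').symm) ((hb e he).trans (hb e' he').symm)

end Normalized

/-- a maximizer of φ^tot (φ^tot = 1) has at most
|V₁| + |V_K| + K − 3 non-zero weights (fully-connected layered net, K > 2). -/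
theorem maximizer_sparsity
    (K : ℕ) (hK : 2 < K) (n : ℕ → ℕ) (E : ℕ → Finset (ℕ × ℕ))
    (W : ℕ → ℕ → ℕ → ℝ)
    (hE : ∀ k, k < K - 1 → E k = (Finset.range (n k)) ×ˢ (Finset.range (n (k+1))))
    (hS : ∀ k, k < K - 1 → 0 < Snorm E W k)
    (hmax : phiTot K E (thetaNorm E W) = 1) :
    ∑ k ∈ Finset.range (K-1), ((E k).filter (fun e => W k e.1 e.2 ≠ 0)).card
      ≤ n 0 + n (K-1) + (K - 3) := by
  have hK₁ : K - 3 + 2 = K - 1 := by omega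
  have hK₂ : K - 3 + 1 + 1 = K - 1 := by omega
  conv_lhs => rw [← hK₁]
  refine sum_range_le_of_le_ends (K - 3) (n 0) (n (K - 1)) (fun k => (nonzeroEdges E W k).card)
    ?_ ?_ fun k hk₀ hk => card_nonzeroEdges_le_one hS hmax hk₀ (by omega)
  · simpa using card_nonzeroEdges_le_card_left hS hmax (by omega) (hE 0 (by omega)).le
  · simpa [hK₂] using
      card_nonzeroEdges_le_card_right hS hmax (by omega) (by omega) (hE (K - 3 + 1) (by omega)).le
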